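/- arXiv:2004.03078 — 3 statements merged into one kernel-verified Lean document; each statement's English description precedes it below -/
import Mathlib

section
/- Let n ≥ 1, let τ > 0, let ρ : [0,τ] → Mₙ(ℂ) be a continuously differentiable family of positive definite density matrices with derivative ρ̇ₜ, let F be a nonempty compact set of positive definite density matrices on ℂⁿ, define M(ϱ) := min_{σ∈F} S(ϱ‖σ), and let σ₀^▼ ∈ F attain this minimum for ρ₀. Set ΔM := M(ρ_τ) − M(ρ₀) and ΔS := S(ρ_τ) − S(ρ₀). If ΔM + ΔS ≥ 0, then |ΔM + ΔS| ≤ ∫₀^τ |Tr[ρ̇ₜ · log σ₀^▼]| dt; equivalently τ ≥ T̃_M(ρ₀,ρ_τ) := |ΔM + ΔS| / ⟨|Tr[ρ̇ₜ log σ₀^▼]|⟩ₜ, where ⟨f⟩ₜ := (1/τ)∫₀^τ f(t) dt. -/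
open Matrix MeasureTheory intervalIntegral Filter
open scoped ComplexOrder

attribute [local instance] Matrix.normedAddCommGroup Matrix.normedSpace

/-- Functional-calculus logarithm of a Hermitian matrix (junk value `0` otherwise):
for `A = U diag(eigenvalues) U†` it is `U diag(log eigenvalues) U†`. -/
noncomputable def matLog {n : ℕ} (A : Matrix (Fin n) (Fin n) ℂ) :
    Matrix (Fin n) (Fin n) ℂ :=
  if hA : A.IsHermitian then
    (hA.eigenvectorUnitary : Matrix (Fin n) (Fin n) ℂ) *
      Matrix.diagonal (fun i => (Real.log (hA.eigenvalues i) : ℂ)) *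
      (hA.eigenvectorUnitary : Matrix (Fin n) (Fin n) ℂ)ᴴ
  else 0

/-- Quantum relative entropy `S(ρ‖σ) = Tr[ρ (log ρ - log σ)]`. -/
noncomputable def relEnt {n : ℕ} (ρ σ : Matrix (Fin n) (Fin n) ℂ) : ℝ :=
  ((ρ * (matLog ρ - matLog σ)).trace).re

/-- Von Neumann entropy `S(ρ) = -Tr[ρ log ρ]`. -/
noncomputable def vnEnt {n : ℕ} (ρ : Matrix (Fin n) (Fin n) ℂ) : ℝ :=
  -((ρ * matLog ρ).trace).re

/-- A positive definite density matrix: positive definite with unit trace. -/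
def IsPDDensity {n : ℕ} (ρ : Matrix (Fin n) (Fin n) ℂ) : Prop :=
  ρ.PosDef ∧ ρ.trace = 1

/-!
Write `S(ρ‖σ) = -S(ρ) - Tr[ρ log σ]`. Since `σ₀` minimises `S(ρ₀‖·)`, `M(ρ₀) + S(ρ₀) = -Tr[ρ₀ log σ₀]`
exactly, while `M(ρ_τ) + S(ρ_τ) ≤ S(ρ_τ‖σ₀) + S(ρ_τ) = -Tr[ρ_τ log σ₀]`. Hence
`ΔM + ΔS ≤ -Tr[(ρ_τ - ρ₀) log σ₀] = -∫₀^τ Tr[ρ̇ₜ log σ₀] dt ≤ ∫₀^τ |Tr[ρ̇ₜ log σ₀]| dt`.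
Since `sInf` of a set unbounded below is `0`, the bound on `M(ρ_τ)` needs `S(ρ_τ‖·)` bounded
below on `F`: `Tr[ρ log σ] ≤ 0` for every density matrix `σ`, whose eigenvalues lie in `(0, 1]`.
-/

lemma Matrix.PosSemidef.eigenvalues_le_one_of_trace_eq_one {m 𝕜 : Type*} [Fintype m]
    [DecidableEq m] [RCLike 𝕜] {A : Matrix m m 𝕜} (hA : A.PosSemidef) (htr : A.trace = 1)
    (i : m) : hA.isHermitian.eigenvalues i ≤ 1 := by
  have hsum : ∑ j, hA.isHermitian.eigenvalues j = 1 := by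
    have := hA.isHermitian.trace_eq_sum_eigenvalues
    rw [htr] at this
    exact_mod_cast this.symm
  exact hsum ▸ Finset.single_le_sum (fun j _ => hA.eigenvalues_nonneg j) (Finset.mem_univ i)

section

variable {n : ℕ}

lemma trace_mul_matLog {σ : Matrix (Fin n) (Fin n) ℂ} (hσ : σ.IsHermitian)
    (ρ : Matrix (Fin n) (Fin n) ℂ) :
    (ρ * matLog σ).trace =
      ∑ i, ((hσ.eigenvectorUnitary : Matrix (Fin n) (Fin n) ℂ)ᴴ * ρ *
        (hσ.eigenvectorUnitary : Matrix (Fin n) (Fin n) ℂ)) i i *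
        (Real.log (hσ.eigenvalues i) : ℂ) := by
  rw [matLog, dif_pos hσ, ← mul_assoc, ← mul_assoc, Matrix.trace_mul_cycle, ← mul_assoc]
  simp [Matrix.trace, Matrix.mul_diagonal]

lemma re_trace_mul_matLog_nonpos {ρ σ : Matrix (Fin n) (Fin n) ℂ} (hρ : ρ.PosSemidef)
    (hσ : σ.PosDef) (htr : σ.trace = 1) : ((ρ * matLog σ).trace).re ≤ 0 := by
  rw [trace_mul_matLog hσ.isHermitian, Complex.re_sum]
  refine Finset.sum_nonpos fun i _ => ?_
  obtain ⟨hdiag_re, -⟩ :=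
    Complex.le_def.mp ((hρ.conjTranspose_mul_mul_same _).diag_nonneg (i := i))
  rw [Complex.re_mul_ofReal]
  exact mul_nonpos_of_nonneg_of_nonpos (by simpa using hdiag_re)
    (Real.log_nonpos (hσ.eigenvalues_pos i).le
      (hσ.posSemidef.eigenvalues_le_one_of_trace_eq_one htr i))

lemma relEnt_eq_neg_vnEnt_sub (ρ σ : Matrix (Fin n) (Fin n) ℂ) :
    relEnt ρ σ = -vnEnt ρ - ((ρ * matLog σ).trace).re := by
  simp [relEnt, vnEnt, mul_sub, Matrix.trace_sub]

lemma neg_vnEnt_le_relEnt {ρ σ : Matrix (Fin n) (Fin n) ℂ} (hρ : ρ.PosSemidef)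
    (hσ : IsPDDensity σ) : -vnEnt ρ ≤ relEnt ρ σ := by
  rw [relEnt_eq_neg_vnEnt_sub]
  linarith [re_trace_mul_matLog_nonpos hρ hσ.1 hσ.2]

lemma sInf_image_relEnt_add_vnEnt_le {ρ : Matrix (Fin n) (Fin n) ℂ} (hρ : ρ.PosSemidef)
    {F : Set (Matrix (Fin n) (Fin n) ℂ)} (hF : ∀ σ ∈ F, IsPDDensity σ)
    {σ₀ : Matrix (Fin n) (Fin n) ℂ} (hσ₀ : σ₀ ∈ F) :
    sInf (relEnt ρ '' F) + vnEnt ρ ≤ -((ρ * matLog σ₀).trace).re := by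
  have hbdd : BddBelow (relEnt ρ '' F) := by
    refine ⟨-vnEnt ρ, ?_⟩
    rintro _ ⟨σ, hσ, rfl⟩
    exact neg_vnEnt_le_relEnt hρ (hF σ hσ)
  have := csInf_le hbdd (Set.mem_image_of_mem _ hσ₀)
  rw [relEnt_eq_neg_vnEnt_sub] at this
  linarith

lemma sInf_image_relEnt_add_vnEnt_eq {ρ : Matrix (Fin n) (Fin n) ℂ}
    {F : Set (Matrix (Fin n) (Fin n) ℂ)} {σ₀ : Matrix (Fin n) (Fin n) ℂ} (hσ₀ : σ₀ ∈ F)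
    (hmin : ∀ σ ∈ F, relEnt ρ σ₀ ≤ relEnt ρ σ) :
    sInf (relEnt ρ '' F) + vnEnt ρ = -((ρ * matLog σ₀).trace).re := by
  have hleast : IsLeast (relEnt ρ '' F) (relEnt ρ σ₀) :=
    ⟨Set.mem_image_of_mem _ hσ₀, by rintro _ ⟨σ, hσ, rfl⟩; exact hmin σ hσ⟩
  rw [hleast.csInf_eq, relEnt_eq_neg_vnEnt_sub]
  ring

end

lemma integral_re_trace_mul_eq_sub {m : Type*} [Fintype m] {a b : ℝ} (hab : a ≤ b)
    {ρ ρ' : ℝ → Matrix m m ℂ} (hderiv : ∀ t ∈ Set.Icc a b, HasDerivAt ρ (ρ' t) t)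
    (hcont : ContinuousOn ρ' (Set.Icc a b)) (C : Matrix m m ℂ) :
    ∫ t in a..b, ((ρ' t * C).trace).re = ((ρ b * C).trace).re - ((ρ a * C).trace).re := by
  let φ : Matrix m m ℂ →L[ℝ] ℝ := LinearMap.toContinuousLinearMap
    (RCLike.reLm ∘ₗ Matrix.traceLinearMap m ℝ ℂ ∘ₗ LinearMap.mulRight ℝ C)
  refine integral_eq_sub_of_hasDerivAt (f := fun t => φ (ρ t)) (f' := fun t => φ (ρ' t))
    (fun t ht => φ.hasFDerivAt.comp_hasDerivAt t (hderiv t ?_)) ?_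
  · rwa [Set.uIcc_of_le hab] at ht
  · exact ((φ.continuous.comp_continuousOn hcont).mono
      (Set.uIcc_of_le hab).subset).intervalIntegrable

theorem resource_speed_limit_of_nonneg_general
    {n : ℕ} {τ : ℝ} (hτ : 0 < τ)
    (ρ ρ' : ℝ → Matrix (Fin n) (Fin n) ℂ)
    (hρ : ∀ t ∈ Set.Icc (0 : ℝ) τ, IsPDDensity (ρ t))
    (hderiv : ∀ t ∈ Set.Icc (0 : ℝ) τ, HasDerivAt ρ (ρ' t) t)
    (hcont : ContinuousOn ρ' (Set.Icc (0 : ℝ) τ))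
    (F : Set (Matrix (Fin n) (Fin n) ℂ))
    (hF : ∀ σ ∈ F, IsPDDensity σ)
    (σ₀ : Matrix (Fin n) (Fin n) ℂ) (hσ₀F : σ₀ ∈ F)
    (hσ₀min : ∀ σ ∈ F, relEnt (ρ 0) σ₀ ≤ relEnt (ρ 0) σ)
    (ΔM ΔS : ℝ)
    (hΔM : ΔM = sInf ((fun σ => relEnt (ρ τ) σ) '' F)
              - sInf ((fun σ => relEnt (ρ 0) σ) '' F))
    (hΔS : ΔS = vnEnt (ρ τ) - vnEnt (ρ 0))
    (hpos : 0 ≤ ΔM + ΔS) :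
    |ΔM + ΔS| ≤ (∫ t in (0 : ℝ)..τ, |((ρ' t * matLog σ₀).trace).re|) ∧
    τ ≥ |ΔM + ΔS| / ((1 / τ) * ∫ t in (0 : ℝ)..τ, |((ρ' t * matLog σ₀).trace).re|) := by
  have hM₀ := sInf_image_relEnt_add_vnEnt_eq hσ₀F hσ₀min
  have hM_τ := sInf_image_relEnt_add_vnEnt_le (hρ τ ⟨hτ.le, le_rfl⟩).1.posSemidef hF hσ₀F
  have hFTC := integral_re_trace_mul_eq_sub hτ.le hderiv hcont (matLog σ₀)
  have hbound : ΔM + ΔS ≤ ∫ t in (0 : ℝ)..τ, |((ρ' t * matLog σ₀).trace).re| :=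
    calc ΔM + ΔS ≤ -∫ t in (0 : ℝ)..τ, ((ρ' t * matLog σ₀).trace).re := by
          rw [hFTC]; linarith
      _ ≤ |∫ t in (0 : ℝ)..τ, ((ρ' t * matLog σ₀).trace).re| := neg_le_abs _
      _ ≤ ∫ t in (0 : ℝ)..τ, |((ρ' t * matLog σ₀).trace).re| :=
          abs_integral_le_integral_abs hτ.le
  rw [abs_of_nonneg hpos]
  refine ⟨hbound, div_le_of_le_mul₀ ?_ hτ.le ?_⟩
  · exact mul_nonneg (by positivity) (integral_nonneg hτ.le fun _ _ => abs_nonneg _)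
  · rwa [← mul_assoc, mul_one_div_cancel hτ.ne', one_mul]

/-- **Corollary 1 of the paper, ΔM + ΔS ≥ 0 case (resource speed limit with total
entropy variation in the numerator).** With `σ₀` the closest free state to `ρ₀`:
if `ΔM + ΔS ≥ 0` then `|ΔM + ΔS| ≤ ∫₀^τ |Tr[ρ̇ₜ log σ₀]| dt`, i.e.
`τ ≥ T̃_M(ρ₀, ρ_τ)`. -/
theorem resource_speed_limit_of_nonneg
    {n : ℕ} (hn : 1 ≤ n) {τ : ℝ} (hτ : 0 < τ)
    (ρ ρ' : ℝ → Matrix (Fin n) (Fin n) ℂ)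
    (hρ : ∀ t ∈ Set.Icc (0 : ℝ) τ, IsPDDensity (ρ t))
    (hderiv : ∀ t ∈ Set.Icc (0 : ℝ) τ, HasDerivAt ρ (ρ' t) t)
    (hcont : ContinuousOn ρ' (Set.Icc (0 : ℝ) τ))
    (F : Set (Matrix (Fin n) (Fin n) ℂ))
    (hFne : F.Nonempty) (hFcpt : IsCompact F) (hF : ∀ σ ∈ F, IsPDDensity σ)
    (σ₀ : Matrix (Fin n) (Fin n) ℂ) (hσ₀F : σ₀ ∈ F)
    (hσ₀min : ∀ σ ∈ F, relEnt (ρ 0) σ₀ ≤ relEnt (ρ 0) σ)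
    (ΔM ΔS : ℝ)
    (hΔM : ΔM = sInf ((fun σ => relEnt (ρ τ) σ) '' F)
              - sInf ((fun σ => relEnt (ρ 0) σ) '' F))
    (hΔS : ΔS = vnEnt (ρ τ) - vnEnt (ρ 0))
    (hpos : 0 ≤ ΔM + ΔS) :
    |ΔM + ΔS| ≤ (∫ t in (0 : ℝ)..τ, |((ρ' t * matLog σ₀).trace).re|) ∧
    τ ≥ |ΔM + ΔS| / ((1 / τ) * ∫ t in (0 : ℝ)..τ, |((ρ' t * matLog σ₀).trace).re|) :=
  resource_speed_limit_of_nonneg_general hτ ρ ρ' hρ hderiv hcont F hF σ₀ hσ₀F hσ₀min ΔM ΔS hΔM hΔS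
    hpos
end

section
/- (Quantum speed limit from relative entropy.) Let n ≥ 1, let τ > 0, and let ρ : [0,τ] → Mₙ(ℂ) be a continuously differentiable family of positive definite density matrices with derivative ρ̇ₜ. Set ΔS := S(ρ_τ) − S(ρ₀). Then both |S(ρ₀‖ρ_τ) − ΔS| ≤ ∫₀^τ |Tr[ρ̇ₜ · log ρ_τ]| dt and |S(ρ_τ‖ρ₀) + ΔS| ≤ ∫₀^τ |Tr[ρ̇ₜ · log ρ₀]| dt hold; consequently τ ≥ max{T(ρ₀,ρ_τ), T(ρ_τ,ρ₀)}, where T(ϱ,ς) := |S(ϱ‖ς) − (S(ς) − S(ϱ))| / ⟨|Tr[ρ̇ₜ log ς]|⟩ₜ and ⟨f⟩ₜ := (1/τ)∫₀^τ f(t) dt. -/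
open Matrix MeasureTheory intervalIntegral Filter
open scoped ComplexOrder

attribute [local instance] Matrix.normedAddCommGroup Matrix.normedSpace

/-
The identity `S(ϱ‖ς) - (S(ς) - S(ϱ)) = Re Tr[(ς - ϱ) log ς]` turns each entropy gap into the change
of the linear functional `A ↦ Re Tr[A log ς]` along the path from `ρ₀` to `ρ_τ`, where `ς` is one
of the two endpoints. By the fundamental theorem of calculus this change is
`∫₀^τ Re Tr[ρ̇ₜ log ς] dt`, whose absolute value is at most `∫₀^τ |Re Tr[ρ̇ₜ log ς]| dt`; dividing
by the time average gives the speed limit.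
-/

open Set

theorem ContinuousLinearMap.abs_sub_le_integral_abs {E : Type*} [NormedAddCommGroup E]
    [NormedSpace ℝ E] (f : E →L[ℝ] ℝ) {γ γ' : ℝ → E} {a b : ℝ} (hab : a ≤ b)
    (hγ : ∀ t ∈ Icc a b, HasDerivAt γ (γ' t) t) (hγ' : ContinuousOn γ' (Icc a b)) :
    |f (γ b) - f (γ a)| ≤ ∫ t in a..b, |f (γ' t)| := by
  rw [← uIcc_of_le hab] at hγ hγ'
  have hftc : ∫ t in a..b, f (γ' t) = f (γ b) - f (γ a) :=
    integral_eq_sub_of_hasDerivAt (fun t ht => f.hasFDerivAt.comp_hasDerivAt t (hγ t ht))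
      (f.continuous.comp_continuousOn hγ').intervalIntegrable
  exact hftc ▸ abs_integral_le_integral_abs hab

noncomputable def reTraceMulRight {m : Type*} [Fintype m] (L : Matrix m m ℂ) :
    Matrix m m ℂ →L[ℝ] ℝ :=
  LinearMap.toContinuousLinearMap
    (Complex.reLm ∘ₗ (traceLinearMap m ℂ ℂ).restrictScalars ℝ ∘ₗ LinearMap.mulRight ℝ L)

theorem relEnt_sub_vnEnt_sub_vnEnt {n : ℕ} (ϱ ς : Matrix (Fin n) (Fin n) ℂ) :
    relEnt ϱ ς - (vnEnt ς - vnEnt ϱ) =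
      ((ς * matLog ς).trace).re - ((ϱ * matLog ς).trace).re := by
  simp only [relEnt, vnEnt, mul_sub, trace_sub, Complex.sub_re]
  ring

theorem div_one_div_mul_le_of_le {x y τ : ℝ} (hτ : 0 ≤ τ) (hx : 0 ≤ x) (hxy : x ≤ y) :
    x / (1 / τ * y) ≤ τ :=
  calc
    x / (1 / τ * y) = τ * (x / y) := by
      rw [div_mul_eq_div_div_swap, one_div, div_inv_eq_mul, mul_comm]
    _ ≤ τ * 1 := mul_le_mul_of_nonneg_left (div_le_one_of_le₀ hxy (hx.trans hxy)) hτ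
    _ = τ := mul_one τ

theorem quantum_speed_limit_relative_entropy_general
    {n : ℕ} {τ : ℝ} (hτ : 0 < τ)
    (ρ ρ' : ℝ → Matrix (Fin n) (Fin n) ℂ)
    (hderiv : ∀ t ∈ Set.Icc (0 : ℝ) τ, HasDerivAt ρ (ρ' t) t)
    (hcont : ContinuousOn ρ' (Set.Icc (0 : ℝ) τ))
    (ΔS : ℝ) (hΔS : ΔS = vnEnt (ρ τ) - vnEnt (ρ 0)) :
    |relEnt (ρ 0) (ρ τ) - ΔS| ≤
      (∫ t in (0 : ℝ)..τ, |((ρ' t * matLog (ρ τ)).trace).re|) ∧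
    |relEnt (ρ τ) (ρ 0) + ΔS| ≤
      (∫ t in (0 : ℝ)..τ, |((ρ' t * matLog (ρ 0)).trace).re|) ∧
    τ ≥ max
      (|relEnt (ρ 0) (ρ τ) - (vnEnt (ρ τ) - vnEnt (ρ 0))| /
        ((1 / τ) * ∫ t in (0 : ℝ)..τ, |((ρ' t * matLog (ρ τ)).trace).re|))
      (|relEnt (ρ τ) (ρ 0) - (vnEnt (ρ 0) - vnEnt (ρ τ))| /
        ((1 / τ) * ∫ t in (0 : ℝ)..τ, |((ρ' t * matLog (ρ 0)).trace).re|)) := by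
  have hgap (L : Matrix (Fin n) (Fin n) ℂ) : |((ρ τ * L).trace).re - ((ρ 0 * L).trace).re| ≤
      ∫ t in (0 : ℝ)..τ, |((ρ' t * L).trace).re| :=
    (reTraceMulRight L).abs_sub_le_integral_abs hτ.le hderiv hcont
  have hforward : |relEnt (ρ 0) (ρ τ) - (vnEnt (ρ τ) - vnEnt (ρ 0))| ≤
      ∫ t in (0 : ℝ)..τ, |((ρ' t * matLog (ρ τ)).trace).re| := by
    rw [relEnt_sub_vnEnt_sub_vnEnt]
    exact hgap _
  have hbackward : |relEnt (ρ τ) (ρ 0) - (vnEnt (ρ 0) - vnEnt (ρ τ))| ≤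
      ∫ t in (0 : ℝ)..τ, |((ρ' t * matLog (ρ 0)).trace).re| := by
    rw [relEnt_sub_vnEnt_sub_vnEnt, abs_sub_comm]
    exact hgap _
  subst hΔS
  refine ⟨hforward, by convert hbackward using 2; ring, ?_⟩
  exact max_le (div_one_div_mul_le_of_le hτ.le (abs_nonneg _) hforward)
    (div_one_div_mul_le_of_le hτ.le (abs_nonneg _) hbackward)

/-- **Corollary 4 of the paper (quantum speed limit from relative entropy).** For a
C¹ family `ρₜ` of positive definite density matrices, both
`|S(ρ₀‖ρ_τ) - ΔS| ≤ ∫₀^τ |Tr[ρ̇ₜ log ρ_τ]| dt` and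
`|S(ρ_τ‖ρ₀) + ΔS| ≤ ∫₀^τ |Tr[ρ̇ₜ log ρ₀]| dt` hold; consequently
`τ ≥ max {T(ρ₀,ρ_τ), T(ρ_τ,ρ₀)}` with
`T(ϱ,ς) = |S(ϱ‖ς) - (S(ς) - S(ϱ))| / ⟨|Tr[ρ̇ₜ log ς]|⟩ₜ`. -/
theorem quantum_speed_limit_relative_entropy
    {n : ℕ} (hn : 1 ≤ n) {τ : ℝ} (hτ : 0 < τ)
    (ρ ρ' : ℝ → Matrix (Fin n) (Fin n) ℂ)
    (hρ : ∀ t ∈ Set.Icc (0 : ℝ) τ, IsPDDensity (ρ t))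
    (hderiv : ∀ t ∈ Set.Icc (0 : ℝ) τ, HasDerivAt ρ (ρ' t) t)
    (hcont : ContinuousOn ρ' (Set.Icc (0 : ℝ) τ))
    (ΔS : ℝ) (hΔS : ΔS = vnEnt (ρ τ) - vnEnt (ρ 0)) :
    |relEnt (ρ 0) (ρ τ) - ΔS| ≤
      (∫ t in (0 : ℝ)..τ, |((ρ' t * matLog (ρ τ)).trace).re|) ∧
    |relEnt (ρ τ) (ρ 0) + ΔS| ≤
      (∫ t in (0 : ℝ)..τ, |((ρ' t * matLog (ρ 0)).trace).re|) ∧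
    τ ≥ max
      (|relEnt (ρ 0) (ρ τ) - (vnEnt (ρ τ) - vnEnt (ρ 0))| /
        ((1 / τ) * ∫ t in (0 : ℝ)..τ, |((ρ' t * matLog (ρ τ)).trace).re|))
      (|relEnt (ρ τ) (ρ 0) - (vnEnt (ρ 0) - vnEnt (ρ τ))| /
        ((1 / τ) * ∫ t in (0 : ℝ)..τ, |((ρ' t * matLog (ρ 0)).trace).re|)) :=
  quantum_speed_limit_relative_entropy_general hτ ρ ρ' hderiv hcont ΔS hΔS
end

section
/- (Saturation of the relative-entropy quantum speed limit under pure depolarisation.) Fix p₀ ∈ (0,1), γ > 0, τ > 0, and define p(t) := 1 − e^{−γt}(1 − p₀) and the probability vectors q(t) := (p(t)/4, p(t)/4, p(t)/4, 1 − 3p(t)/4) for t ∈ [0,τ]. Then |D(q(0)‖q(τ)) − (H(q(τ)) − H(q(0)))| = ∫₀^τ |Σᵢ q̇ᵢ(t) log qᵢ(τ)| dt, where D(q‖s) := Σᵢ qᵢ(log qᵢ − log sᵢ) and H(q) := −Σᵢ qᵢ log qᵢ. Equivalently, the quantum speed limit T(ρ₀,ρ_τ) of Corollary 4 equals τ for the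 pure depolarisation orbit of Werner states. -/
/-- Classical Kullback–Leibler divergence `D(q‖s) = ∑ᵢ qᵢ (log qᵢ - log sᵢ)`. -/
noncomputable def klDiv4 (q s : Fin 4 → ℝ) : ℝ :=
  ∑ i, q i * (Real.log (q i) - Real.log (s i))

/-- Shannon entropy `H(q) = -∑ᵢ qᵢ log qᵢ`. -/
noncomputable def shannonH4 (q : Fin 4 → ℝ) : ℝ :=
  -∑ i, q i * Real.log (q i)

/-!
Since `D(q‖s) - (H(s) - H(q)) = ∑ᵢ (sᵢ - qᵢ) log sᵢ`, both sides of the speed limit see the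
spectrum only through `g(t) = ∑ᵢ qᵢ(t) log qᵢ(τ)`: the left side is `|g(τ) - g(0)|`, the right
side `∫₀^τ |ġ|`. Under depolarisation the spectrum moves along the fixed direction
`(1/4, 1/4, 1/4, -3/4)` at the nonnegative speed `ṗ(t)`, so `ġ` never changes sign and
`|∫ ġ| = ∫ |ġ|`.
-/

open Real Set intervalIntegral

theorem klDiv4_sub_shannonH4_sub (q s : Fin 4 → ℝ) :
    klDiv4 q s - (shannonH4 s - shannonH4 q) = ∑ i, (s i - q i) * log (s i) := by
  simp only [klDiv4, shannonH4, Fin.sum_univ_four]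
  ring

theorem integral_abs_mul_const_of_hasDerivAt_of_nonneg {φ φ' : ℝ → ℝ} {a b : ℝ} (hab : a ≤ b)
    (hφ : ∀ t ∈ Icc a b, HasDerivAt φ (φ' t) t) (hφ' : ∀ t ∈ Icc a b, 0 ≤ φ' t) (c : ℝ) :
    ∫ t in a..b, |φ' t * c| = (φ b - φ a) * |c| := by
  have hcont : ContinuousOn φ (Icc a b) := fun t ht => (hφ t ht).continuousAt.continuousWithinAt
  have hφIoo : ∀ t ∈ Ioo a b, HasDerivAt φ (φ' t) t := fun t ht => hφ t (Ioo_subset_Icc_self ht)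
  have hint : IntervalIntegrable φ' MeasureTheory.volume a b := by
    refine intervalIntegrable_deriv_of_nonneg (by rwa [uIcc_of_le hab]) ?_ ?_
    · simpa only [min_eq_left hab, max_eq_right hab] using hφIoo
    · simpa only [min_eq_left hab, max_eq_right hab] using
        fun t ht => hφ' t (Ioo_subset_Icc_self ht)
  calc ∫ t in a..b, |φ' t * c| = ∫ t in a..b, φ' t * |c| := by
        refine integral_congr fun t ht => ?_
        rw [uIcc_of_le hab] at ht
        rw [abs_mul, abs_of_nonneg (hφ' t ht)]
    _ = (φ b - φ a) * |c| := by
        rw [intervalIntegral.integral_mul_const,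
          integral_eq_sub_of_hasDerivAt_of_le hab hcont hφIoo hint]

theorem abs_sum_sub_mul_eq_integral_abs_sum_deriv_mul {ι : Type*} [Fintype ι]
    {q : ℝ → ι → ℝ} {x v : ι → ℝ} {φ φ' : ℝ → ℝ} {a b : ℝ} (hab : a ≤ b)
    (hq : ∀ t i, q t i = x i + φ t * v i)
    (hφ : ∀ t ∈ Icc a b, HasDerivAt φ (φ' t) t) (hφ' : ∀ t ∈ Icc a b, 0 ≤ φ' t) (w : ι → ℝ) :
    |∑ i, (q b i - q a i) * w i| = ∫ t in a..b, |∑ i, deriv (fun s => q s i) t * w i| := by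
  set c := ∑ i, v i * w i
  have hmono : φ a ≤ φ b := by
    refine monotoneOn_of_hasDerivWithinAt_nonneg (convex_Icc a b)
      (fun t ht => (hφ t ht).continuousAt.continuousWithinAt)
      (fun t ht => (hφ t (interior_subset ht)).hasDerivWithinAt)
      (fun t ht => hφ' t (interior_subset ht)) ⟨le_rfl, hab⟩ ⟨hab, le_rfl⟩ hab
  have hderiv : ∀ t ∈ Icc a b, ∀ i, deriv (fun s => q s i) t = φ' t * v i := by
    intro t ht i
    simp_rw [hq]
    exact (((hφ t ht).mul_const (v i)).const_add (x i)).deriv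
  calc |∑ i, (q b i - q a i) * w i| = |(φ b - φ a) * c| := by
        simp only [hq, c, Finset.mul_sum]
        congr 1
        exact Finset.sum_congr rfl fun i _ => by ring
    _ = (φ b - φ a) * |c| := by rw [abs_mul, abs_of_nonneg (sub_nonneg.2 hmono)]
    _ = ∫ t in a..b, |φ' t * c| :=
        (integral_abs_mul_const_of_hasDerivAt_of_nonneg hab hφ hφ' c).symm
    _ = ∫ t in a..b, |∑ i, deriv (fun s => q s i) t * w i| := by
        refine integral_congr fun t ht => ?_
        rw [uIcc_of_le hab] at ht
        simp only [hderiv t ht, c, Finset.mul_sum, mul_assoc]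

/-- **Saturation of the relative-entropy quantum speed limit under pure
depolarisation.** With `p(t) = 1 - e^{-γt}(1 - p₀)` and
`q(t) = (p(t)/4, p(t)/4, p(t)/4, 1 - 3p(t)/4)` the spectrum of the depolarising
Werner state, `|D(q(0)‖q(τ)) - (H(q(τ)) - H(q(0)))| = ∫₀^τ |∑ᵢ q̇ᵢ(t) log qᵢ(τ)| dt`;
equivalently, the quantum speed limit `T(ρ₀,ρ_τ)` of Corollary 4 equals `τ` on the
pure depolarisation orbit of Werner states. -/
theorem depolarisation_saturates_quantum_speed_limit
    (p₀ γ τ : ℝ) (hp₀ : p₀ ∈ Set.Ioo (0 : ℝ) 1) (hγ : 0 < γ) (hτ : 0 < τ)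
    (p : ℝ → ℝ) (hp : p = fun t => 1 - Real.exp (-γ * t) * (1 - p₀))
    (q : ℝ → Fin 4 → ℝ)
    (hq : q = fun t => ![p t / 4, p t / 4, p t / 4, 1 - 3 * p t / 4]) :
    |klDiv4 (q 0) (q τ) - (shannonH4 (q τ) - shannonH4 (q 0))| =
      ∫ t in (0 : ℝ)..τ, |∑ i, deriv (fun s => q s i) t * Real.log (q τ i)| := by
  have hp_deriv : ∀ t, HasDerivAt p (γ * exp (-γ * t) * (1 - p₀)) t := by
    intro t
    rw [hp]
    exact ((((hasDerivAt_id' t).const_mul (-γ)).exp.mul_const (1 - p₀)).const_sub 1).congr_deriv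
      (by ring)
  have hq_line : ∀ t i, q t i = ![0, 0, 0, 1] i + p t * ![1 / 4, 1 / 4, 1 / 4, -3 / 4] i := by
    subst hq
    intro t i
    fin_cases i <;> simp <;> ring
  rw [klDiv4_sub_shannonH4_sub]
  exact abs_sum_sub_mul_eq_integral_abs_sum_deriv_mul hτ.le hq_line (fun t _ => hp_deriv t)
    (fun t _ => mul_nonneg (by positivity) (sub_nonneg.2 hp₀.2.le)) _
end
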